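/- Let m, L, d be positive integers with L ≥ 2 and 1 ≤ w_s ≤ L. Then w_s^m · S(m,L,d,w_s) ≤ L^m · S(m,L−1,d,w_s−1), i.e., S(m,L,d,w_s) ≤ (L/w_s)^m · S(m,L−1,d,w_s−1) (a Johnson-type bound for SECCs). -/

import Mathlib

/-! Fix a position `j i` in every subblock. The codewords having a one at all these positions
agree there, so deleting them preserves distances and, by weight, yields an
`(m, L-1, d, w-1)`-SECC; hence each such subcode has at most `S(m,L-1,d,w-1)` words. A codeword
with subblock weights `wᵢ ≥ w` lies in `∏ wᵢ ≥ w^m` of the `L^m` subcodes, and double counting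
gives `w^m · |C| ≤ L^m · S(m,L-1,d,w-1)`. -/

open Finset Filter

/-- Weight (number of ones) of a binary word. -/
def wt {n : ℕ} (x : Fin n → Bool) : ℕ := (Finset.univ.filter fun i => x i = true).card

/-- The index (in a word of length `m * L`) of position `j` of subblock `i`. -/
def subIdx (m L : ℕ) (i : Fin m) (j : Fin L) : Fin (m * L) :=
  ⟨i.val * L + j.val, by
    have hj : j.val < L := j.isLt
    have hi : i.val + 1 ≤ m := i.isLt
    calc i.val * L + j.val < i.val * L + L := Nat.add_lt_add_left hj _
      _ = (i.val + 1) * L := by ring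
      _ ≤ m * L := Nat.mul_le_mul hi (Nat.le_refl L)⟩

/-- The `i`-th subblock (of length `L`) of a binary word of length `m * L`. -/
def subblock (m L : ℕ) (x : Fin (m * L) → Bool) (i : Fin m) : Fin L → Bool :=
  fun j => x (subIdx m L i j)

/-- The CSCC space: binary words of length `m * L` each of whose `m` subblocks of
length `L` has weight exactly `w`. -/
def CSCCspace (m L w : ℕ) : Set (Fin (m * L) → Bool) :=
  {x | ∀ i : Fin m, wt (subblock m L x i) = w}

/-- The SECC space: binary words of length `m * L` each of whose `m` subblocks of
length `L` has weight at least `w`. -/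
def SECCspace (m L w : ℕ) : Set (Fin (m * L) → Bool) :=
  {x | ∀ i : Fin m, w ≤ wt (subblock m L x i)}

/-- A code with minimum distance `d` inside the space `Sp`. -/
def isCode {n : ℕ} (Sp : Set (Fin n → Bool)) (d : ℕ) (C : Finset (Fin n → Bool)) : Prop :=
  (↑C : Set (Fin n → Bool)) ⊆ Sp ∧ ∀ x ∈ C, ∀ y ∈ C, x ≠ y → d ≤ hammingDist x y

/-- The ball of radius `t` around `x`, taken inside the space `Sp`. -/
def ball {n : ℕ} (Sp : Set (Fin n → Bool)) (x : Fin n → Bool) (t : ℕ) :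
    Set (Fin n → Bool) :=
  {y | y ∈ Sp ∧ hammingDist x y ≤ t}

/-- `C(m,L,d,w)`: the maximum size of an `(m,L,d,w)`-CSCC. -/
noncomputable def maxCSCC (m L d w : ℕ) : ℕ :=
  sSup {k | ∃ C : Finset (Fin (m * L) → Bool), isCode (CSCCspace m L w) d C ∧ C.card = k}

/-- `S(m,L,d,w)`: the maximum size of an `(m,L,d,w)`-SECC. -/
noncomputable def maxSECC (m L d w : ℕ) : ℕ :=
  sSup {k | ∃ C : Finset (Fin (m * L) → Bool), isCode (SECCspace m L w) d C ∧ C.card = k}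

/-- `A(n,d,w)`: the maximum size of a constant weight code. -/
noncomputable def maxCWC (n d w : ℕ) : ℕ :=
  sSup {k | ∃ C : Finset (Fin n → Bool), isCode {x | wt x = w} d C ∧ C.card = k}

/-- `H(n,d,w)`: the maximum size of a heavy weight code. -/
noncomputable def maxHWC (n d w : ℕ) : ℕ :=
  sSup {k | ∃ C : Finset (Fin n → Bool), isCode {x | w ≤ wt x} d C ∧ C.card = k}

/-- `A(n,d)`: the maximum size of a binary code of length `n` and distance `d`. -/
noncomputable def maxBinary (n d : ℕ) : ℕ :=
  sSup {k | ∃ C : Finset (Fin n → Bool),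
    (∀ x ∈ C, ∀ y ∈ C, x ≠ y → d ≤ hammingDist x y) ∧ C.card = k}

/-- `A_q(n,d)`: the maximum size of a `q`-ary code of length `n` and distance `d`. -/
noncomputable def maxQary (q n d : ℕ) : ℕ :=
  sSup {k | ∃ C : Finset (Fin n → Fin q),
    (∀ x ∈ C, ∀ y ∈ C, x ≠ y → d ≤ hammingDist x y) ∧ C.card = k}

/-- The size of a radius-`r` CSCC ball: the sum over all tuples `(u_1, …, u_m)` with
`0 ≤ u_i ≤ min{w, L-w}` and `2(u_1 + ⋯ + u_m) ≤ r` of `∏ i, C(w,u_i)·C(L-w,u_i)`. -/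
def csccBallSize (m L w r : ℕ) : ℕ :=
  ∑ u ∈ (Finset.univ : Finset (Fin m → Fin (min w (L - w) + 1))).filter
      (fun u => 2 * (∑ i, (u i : ℕ)) ≤ r),
    ∏ i, (w.choose (u i : ℕ)) * ((L - w).choose (u i : ℕ))

/-- The binary entropy function (base-2 logarithms, `h 0 = h 1 = 0`). -/
noncomputable def binent (p : ℝ) : ℝ :=
  -(p * Real.logb 2 p) - (1 - p) * Real.logb 2 (1 - p)

/-- The asymptotic CSCC rate `γ(L,δ,w/L)`. -/
noncomputable def gammaRate (L : ℕ) (δ : ℝ) (w : ℕ) : ℝ :=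
  Filter.limsup (fun m : ℕ =>
    Real.logb 2 (maxCSCC m L ⌊(m : ℝ) * L * δ⌋₊ w) / ((m : ℝ) * L)) Filter.atTop

/-- The asymptotic SECC rate `σ(L,δ,w/L)`. -/
noncomputable def sigmaRate (L : ℕ) (δ : ℝ) (w : ℕ) : ℝ :=
  Filter.limsup (fun m : ℕ =>
    Real.logb 2 (maxSECC m L ⌊(m : ℝ) * L * δ⌋₊ w) / ((m : ℝ) * L)) Filter.atTop

section Subblocks

variable {m L : ℕ}

lemma subIdx_eq_finProdFinEquiv (i : Fin m) (t : Fin L) :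
    subIdx m L i t = finProdFinEquiv (i, t) :=
  Fin.ext (by simp [subIdx, finProdFinEquiv, Nat.add_comm, Nat.mul_comm])

lemma sum_eq_sum_subIdx {M : Type*} [AddCommMonoid M] (f : Fin (m * L) → M) :
    ∑ k, f k = ∑ i, ∑ t, f (subIdx m L i t) := by
  simp only [subIdx_eq_finProdFinEquiv, ← Fintype.sum_prod_type']
  exact (Equiv.sum_comp finProdFinEquiv f).symm

lemma hammingDist_eq_sum_subblock (x y : Fin (m * L) → Bool) :
    hammingDist x y = ∑ i, hammingDist (subblock m L x i) (subblock m L y i) := by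
  simp only [hammingDist, card_filter]
  exact sum_eq_sum_subIdx _

def ofSubblocks (m L : ℕ) (b : Fin m → Fin L → Bool) : Fin (m * L) → Bool :=
  fun k => b (finProdFinEquiv.symm k).1 (finProdFinEquiv.symm k).2

@[simp]
lemma subblock_ofSubblocks (b : Fin m → Fin L → Bool) : subblock m L (ofSubblocks m L b) = b := by
  funext i t
  simp [subblock, ofSubblocks, subIdx_eq_finProdFinEquiv]

end Subblocks

lemma wt_eq_ite_add_wt_comp_succAbove {n : ℕ} (y : Fin (n + 1) → Bool) (p : Fin (n + 1)) :
    wt y = (if y p = true then 1 else 0) + wt (y ∘ p.succAbove) := by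
  simp only [wt, card_filter]
  exact Fin.sum_univ_succAbove _ p

lemma hammingDist_comp_succAbove {n : ℕ} {β : Type*} [DecidableEq β] {u v : Fin (n + 1) → β}
    {p : Fin (n + 1)} (h : u p = v p) :
    hammingDist (u ∘ p.succAbove) (v ∘ p.succAbove) = hammingDist u v := by
  simp only [hammingDist, card_filter]
  rw [Fin.sum_univ_succAbove _ p, h]
  simp

section Puncture

variable {m n : ℕ}

def puncture (j : Fin m → Fin (n + 1)) (x : Fin (m * (n + 1)) → Bool) : Fin (m * n) → Bool :=
  ofSubblocks m n fun i => subblock m (n + 1) x i ∘ (j i).succAbove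

def OnesAt (j : Fin m → Fin (n + 1)) (x : Fin (m * (n + 1)) → Bool) : Prop :=
  ∀ i, subblock m (n + 1) x i (j i) = true

lemma hammingDist_puncture {j : Fin m → Fin (n + 1)} {x y : Fin (m * (n + 1)) → Bool}
    (hx : OnesAt j x) (hy : OnesAt j y) :
    hammingDist (puncture j x) (puncture j y) = hammingDist x y := by
  rw [hammingDist_eq_sum_subblock, hammingDist_eq_sum_subblock x]
  refine sum_congr rfl fun i _ => ?_
  simp only [puncture, subblock_ofSubblocks]
  exact hammingDist_comp_succAbove ((hx i).trans (hy i).symm)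

lemma puncture_mem_SECCspace {v : ℕ} {j : Fin m → Fin (n + 1)} {x : Fin (m * (n + 1)) → Bool}
    (hx : x ∈ SECCspace m (n + 1) (v + 1)) (hxj : OnesAt j x) :
    puncture j x ∈ SECCspace m n v := by
  intro i
  have := hx i
  rw [wt_eq_ite_add_wt_comp_succAbove _ (j i), if_pos (hxj i)] at this
  simp only [puncture, subblock_ofSubblocks]
  omega

end Puncture

section Codes

variable {m L n d v : ℕ}

lemma bddAbove_card_isCode {N : ℕ} (Sp : Set (Fin N → Bool)) (d : ℕ) :
    BddAbove {k | ∃ C : Finset (Fin N → Bool), isCode Sp d C ∧ #C = k} := by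
  refine ⟨2 ^ N, ?_⟩
  rintro k ⟨C, -, rfl⟩
  simpa using card_le_univ C

lemma card_le_maxSECC {C : Finset (Fin (m * L) → Bool)} (hC : isCode (SECCspace m L v) d C) :
    #C ≤ maxSECC m L d v :=
  le_csSup (bddAbove_card_isCode _ d) ⟨C, hC, rfl⟩

lemma exists_isCode_card_eq_maxSECC (m L d v : ℕ) :
    ∃ C : Finset (Fin (m * L) → Bool), isCode (SECCspace m L v) d C ∧ #C = maxSECC m L d v := by
  refine Nat.sSup_mem ?_ (bddAbove_card_isCode _ d)
  exact ⟨0, ∅, ⟨by simp, by simp⟩, rfl⟩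

open Classical in
lemma card_filter_onesAt_le_maxSECC {C : Finset (Fin (m * (n + 1)) → Bool)}
    (hC : isCode (SECCspace m (n + 1) (v + 1)) d C) (j : Fin m → Fin (n + 1)) :
    #{x ∈ C | OnesAt j x} ≤ maxSECC m n d v := by
  set Cj : Finset _ := {x ∈ C | OnesAt j x}
  have hdist : ∀ x ∈ Cj, ∀ y ∈ Cj, hammingDist (puncture j x) (puncture j y) = hammingDist x y :=
    fun x hx y hy => hammingDist_puncture (mem_filter.1 hx).2 (mem_filter.1 hy).2
  have hinj : Set.InjOn (puncture j) Cj := by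
    intro x hx y hy hxy
    rw [← hammingDist_eq_zero, ← hdist x hx y hy, hxy, hammingDist_self]
  rw [← card_image_of_injOn hinj]
  refine card_le_maxSECC ⟨?_, ?_⟩
  · simp only [coe_image, Set.image_subset_iff]
    intro x hx
    exact puncture_mem_SECCspace (hC.1 (mem_filter.1 hx).1) (mem_filter.1 hx).2
  · simp only [mem_image]
    rintro _ ⟨x, hx, rfl⟩ _ ⟨y, hy, rfl⟩ hne
    rw [hdist x hx y hy]
    exact hC.2 x (mem_filter.1 hx).1 y (mem_filter.1 hy).1 fun h => hne (h ▸ rfl)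

open Classical in
lemma card_onesAt_eq_prod_wt (x : Fin (m * (n + 1)) → Bool) :
    #{j : Fin m → Fin (n + 1) | OnesAt j x} = ∏ i, wt (subblock m (n + 1) x i) := by
  have : ({j | OnesAt j x} : Finset (Fin m → Fin (n + 1))) =
      Fintype.piFinset fun i => {t | subblock m (n + 1) x i t = true} := by
    ext j
    simp only [mem_filter, mem_univ, true_and, Fintype.mem_piFinset]
    rfl
  rw [this, Fintype.card_piFinset]
  rfl

end Codes

open Classical in
lemma pow_mul_card_le_of_isCode {m n d v : ℕ} {C : Finset (Fin (m * (n + 1)) → Bool)}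
    (hC : isCode (SECCspace m (n + 1) (v + 1)) d C) :
    (v + 1) ^ m * #C ≤ (n + 1) ^ m * maxSECC m n d v := by
  have hAbove : ∀ x ∈ C, (v + 1) ^ m ≤ #(univ.bipartiteAbove (fun x j => OnesAt j x) x) := by
    intro x hx
    rw [bipartiteAbove, card_onesAt_eq_prod_wt]
    simpa using prod_le_prod' (s := univ) fun i _ => hC.1 hx i
  have hBelow : ∀ j ∈ univ, #(C.bipartiteBelow (fun x j => OnesAt j x) j) ≤ maxSECC m n d v :=
    fun j _ => card_filter_onesAt_le_maxSECC hC j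
  simpa [mul_comm] using card_nsmul_le_card_nsmul _ hAbove hBelow

theorem stmt_8_general (m L d w : ℕ) (hL : 2 ≤ L) (hw1 : 1 ≤ w) :
    w ^ m * maxSECC m L d w ≤ L ^ m * maxSECC m (L - 1) d (w - 1) := by
  obtain ⟨n, rfl⟩ : ∃ n, L = n + 1 := ⟨L - 1, by omega⟩
  obtain ⟨v, rfl⟩ : ∃ v, w = v + 1 := ⟨w - 1, by omega⟩
  obtain ⟨C, hC, hCcard⟩ := exists_isCode_card_eq_maxSECC m (n + 1) d (v + 1)
  rw [← hCcard, Nat.add_sub_cancel, Nat.add_sub_cancel]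
  exact pow_mul_card_le_of_isCode hC

/-- Johnson-type bound for SECCs: `w^m · S(m,L,d,w) ≤ L^m · S(m,L-1,d,w-1)`. -/
theorem stmt_8 (m L d w : ℕ) (hm : 0 < m) (hL : 2 ≤ L) (hd : 0 < d)
    (hw1 : 1 ≤ w) (hw2 : w ≤ L) :
    w ^ m * maxSECC m L d w ≤ L ^ m * maxSECC m (L - 1) d (w - 1) :=
  stmt_8_general m L d w hL hw1
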